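/- arXiv:1903.01140 — 5 statements merged into one kernel-verified Lean document; each statement's English description precedes it below -/
import Mathlib

section
/- Suppose that ⟨f_n⟩ is a sequence of polynomials with f_n(0) ≠ 0 for all n, lim_{n→∞} f_n(0) exists and is nonzero, and f_n → f weakly for a formal power series f. Then for every positive integer k the sequence ⟨s_k(f_n)⟩ converges. Moreover, if f represents an analytic function in a neighborhood of 0, then lim_{n→∞} s_k(f_n) = −(1/(k−1)!)·(f'/f)^{(k−1)}(0) for every positive integer k. -/
/-!
If `f(0) ≠ 0` and `a₁, …, a_d` are the zeros of `f`, then `f'/f = Σⱼ 1/(z - aⱼ)` near `0`, so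
`s_k(f) = -(1/(k-1)!) (f'/f)^{(k-1)}(0)`. Differentiating `f' = (f'/f) f` with Leibniz' rule
expresses the derivatives of `f'/f` at `0` through those of `f` by a recursion (`logDerivSeq`)
which only divides by `f(0)`. It is therefore continuous in the derivatives of `f` at `0`, and
these converge under weak convergence. If the limit series defines an analytic `F`, the same
recursion computes the derivatives of `F'/F` at `0`, which identifies the limit.
-/

noncomputable section
open Filter Polynomial Topology

/-- `f_n → a` weakly: for every `k`, `f_n^{(k)}(0) → k! * a_k`. -/
def WeakConv (f : ℕ → Polynomial ℂ) (a : ℕ → ℂ) : Prop :=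
  ∀ k : ℕ, Tendsto (fun n => (Polynomial.derivative^[k] (f n)).eval 0) atTop
    (𝓝 ((Nat.factorial k : ℂ) * a k))

def WeakConvR (f : ℕ → Polynomial ℝ) (a : ℕ → ℝ) : Prop :=
  ∀ k : ℕ, Tendsto (fun n => (Polynomial.derivative^[k] (f n)).eval 0) atTop
    (𝓝 ((Nat.factorial k : ℝ) * a k))

/-- The nonnegative real axis `[0,∞)` as a subset of `ℂ`. -/
def S0 : Set ℂ := {z : ℂ | z.im = 0 ∧ 0 ≤ z.re}

/-- The Pólya–Obrechkoff class. -/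
def PolyaObrechkoff (F : ℂ → ℂ) : Prop :=
  ∃ (ι : Type) (_ : Countable ι) (c : ℂ) (m : ℕ) (α : ℝ) (β : ℂ) (a : ι → ℂ),
    0 ≤ α ∧
    (∀ j, a j ≠ 0 ∧ 0 ≤ (a j).im) ∧
    Summable (fun j => (‖a j‖⁻¹) ^ 2) ∧
    Summable (fun j => (-(a j)⁻¹).im) ∧
    (∑' j, (-(a j)⁻¹).im) ≤ β.im ∧
    ∀ z : ℂ, F z = c * z ^ m * Complex.exp (-(α : ℂ) * z ^ 2 + β * z) *
      ∏' j, ((1 - z / a j) * Complex.exp (z / a j))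

/-- The Laguerre–Pólya class. -/
def LaguerrePolya (F : ℂ → ℂ) : Prop :=
  ∃ (ι : Type) (_ : Countable ι) (c : ℝ) (m : ℕ) (α : ℝ) (β : ℝ) (a : ι → ℝ),
    0 ≤ α ∧
    (∀ j, a j ≠ 0) ∧
    Summable (fun j => ((a j)⁻¹) ^ 2) ∧
    ∀ z : ℂ, F z = (c : ℂ) * z ^ m * Complex.exp (-(α : ℂ) * z ^ 2 + (β : ℂ) * z) *
      ∏' j, ((1 - z / (a j : ℂ)) * Complex.exp (z / (a j : ℂ)))

/-- The class `LP*`: products of a real polynomial with a Laguerre–Pólya function. -/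
def LPStar (F : ℂ → ℂ) : Prop :=
  ∃ (P : Polynomial ℝ) (g : ℂ → ℂ), LaguerrePolya g ∧
    ∀ z : ℂ, F z = (P.map (algebraMap ℝ ℂ)).eval z * g z

/-- The class `LP(S₀)`. -/
def LPS0 (F : ℂ → ℂ) : Prop :=
  ∃ (ι : Type) (_ : Countable ι) (c : ℝ) (m : ℕ) (α : ℝ) (a : ι → ℝ),
    0 ≤ α ∧
    (∀ j, 0 < a j) ∧
    Summable (fun j => (a j)⁻¹) ∧
    ∀ z : ℂ, F z = (c : ℂ) * z ^ m * Complex.exp (-(α : ℂ) * z) *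
      ∏' j, (1 - z / (a j : ℂ))

/-- The class `LP(S₀)*`. -/
def LPS0Star (F : ℂ → ℂ) : Prop :=
  ∃ (P : Polynomial ℝ) (g : ℂ → ℂ), LPS0 g ∧
    ∀ z : ℂ, F z = (P.map (algebraMap ℝ ℂ)).eval z * g z

/-- `s_k(f) = Σ_j a_j^{-k}`, sum over the roots of `f` with multiplicity. -/
def sPow (k : ℕ) (f : Polynomial ℂ) : ℂ := (f.roots.map (fun a => (a⁻¹) ^ k)).sum

/-- `s̃_k(f) = Σ_j |a_j|^{-k}`, sum over the roots of `f` with multiplicity. -/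
def sAbs (k : ℕ) (f : Polynomial ℂ) : ℝ :=
  (f.roots.map (fun a => (‖a‖⁻¹) ^ k)).sum

open scoped Classical in
/-- `N(f;X)`: number of zeros of the polynomial `f` in `X`, with multiplicity. -/
def NPoly (g : Polynomial ℂ) (X : Set ℂ) : ℕ :=
  Multiset.card (g.roots.filter (fun z => z ∈ X))

/-- `N(f;X)` for a real polynomial, zeros counted in `ℂ`. -/
def NPolyR (g : Polynomial ℝ) (X : Set ℂ) : ℕ := NPoly (g.map (algebraMap ℝ ℂ)) X

/-- The `n`-th Jensen polynomial of the series `Σ a_k z^k`. -/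
def jensen (a : ℕ → ℂ) (n : ℕ) : Polynomial ℂ :=
  ∑ k ∈ Finset.range (n + 1),
    Polynomial.C ((n.factorial : ℂ) / ((n - k).factorial : ℂ) * a k) * Polynomial.X ^ k

def jensenR (a : ℕ → ℝ) (n : ℕ) : Polynomial ℝ :=
  ∑ k ∈ Finset.range (n + 1),
    Polynomial.C ((n.factorial : ℝ) / ((n - k).factorial : ℝ) * a k) * Polynomial.X ^ k

/-- The `n`-th Appell polynomial of the series `Σ a_k z^k`. -/
def appellR (a : ℕ → ℝ) (n : ℕ) : Polynomial ℝ :=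
  ∑ k ∈ Finset.range (n + 1),
    Polynomial.C ((n.factorial : ℝ) / ((n - k).factorial : ℝ) * a k) * Polynomial.X ^ (n - k)

/-- Order of vanishing of `F` at `z` (least `m` with `F^{(m)}(z) ≠ 0`; `0` if none). -/
def zeroOrder (F : ℂ → ℂ) (z : ℂ) : ℕ := sInf {m : ℕ | iteratedDeriv m F z ≠ 0}

/-- `N(F;X)` for an entire function: zeros in `X` counted with multiplicity. -/
def NEnt (F : ℂ → ℂ) (X : Set ℂ) : ℕ∞ := ∑' z : X, (zeroOrder F z : ℕ∞)

section LogDerivSeq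

variable {K : Type*} [Field K]

def logDerivSeq (D : ℕ → K) : ℕ → K
  | j => (D (j + 1) - ∑ i : Fin j, (j.choose i : K) * logDerivSeq D i * D (j - i)) / D 0

lemma logDerivSeq_eq (D : ℕ → K) (j : ℕ) :
    logDerivSeq D j =
      (D (j + 1) - ∑ i ∈ Finset.range j, (j.choose i : K) * logDerivSeq D i * D (j - i)) / D 0 := by
  rw [logDerivSeq,
    Fin.sum_univ_eq_sum_range (fun i => (j.choose i : K) * logDerivSeq D i * D (j - i))]

lemma eq_logDerivSeq_of_recursion {D E : ℕ → K} (hD0 : D 0 ≠ 0)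
    (h : ∀ j, D (j + 1) = ∑ i ∈ Finset.range (j + 1), (j.choose i : K) * E i * D (j - i)) :
    E = logDerivSeq D := by
  funext j
  induction j using Nat.strong_induction_on with
  | _ j ih =>
    rw [logDerivSeq_eq, h j, Finset.sum_range_succ,
      Finset.sum_congr rfl fun i hi => by rw [ih i (Finset.mem_range.mp hi)]]
    simp only [Nat.choose_self, Nat.cast_one, one_mul, Nat.sub_self]
    rw [add_sub_cancel_left, mul_div_cancel_right₀ _ hD0]

lemma tendsto_logDerivSeq [TopologicalSpace K] [IsTopologicalDivisionRing K] {ι : Type*}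
    {l : Filter ι} {D : ι → ℕ → K} {L : ℕ → K} (hL0 : L 0 ≠ 0)
    (hD : ∀ k, Tendsto (fun n => D n k) l (𝓝 (L k))) (j : ℕ) :
    Tendsto (fun n => logDerivSeq (D n) j) l (𝓝 (logDerivSeq L j)) := by
  induction j using Nat.strong_induction_on with
  | _ j ih =>
    simp only [logDerivSeq_eq (D _) j, logDerivSeq_eq L j]
    exact ((hD (j + 1)).sub (tendsto_finsetSum _ fun i hi =>
      (tendsto_const_nhds.mul (ih i (Finset.mem_range.mp hi))).mul (hD (j - i)))).div (hD 0) hL0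

end LogDerivSeq

section

variable {𝕜 : Type*} [NontriviallyNormedField 𝕜]

theorem AnalyticAt.iteratedDeriv_logDeriv [CompleteSpace 𝕜] {H : 𝕜 → 𝕜} {x : 𝕜}
    (hH : AnalyticAt 𝕜 H x) (hx : H x ≠ 0) (j : ℕ) :
    iteratedDeriv j (logDeriv H) x = logDerivSeq (fun k => iteratedDeriv k H x) j := by
  refine congrFun (eq_logDerivSeq_of_recursion (E := fun i => iteratedDeriv i (logDeriv H) x)
    (by simpa using hx) fun m => ?_) j
  have hlog : AnalyticAt 𝕜 (logDeriv H) x := hH.deriv.div hH hx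
  have hderiv : deriv H =ᶠ[𝓝 x] logDeriv H * H := by
    filter_upwards [hH.continuousAt.eventually_ne hx] with z hz
    simp [logDeriv_apply, div_mul_cancel₀ _ hz]
  rw [iteratedDeriv_succ', hderiv.iteratedDeriv_eq,
    iteratedDeriv_mul hlog.contDiffAt hH.contDiffAt]

theorem Polynomial.iteratedDeriv_eval (p : 𝕜[X]) (m : ℕ) :
    iteratedDeriv m (fun z => p.eval z) = fun z => (derivative^[m] p).eval z := by
  induction m generalizing p with
  | zero => simp
  | succ m ih =>
    have hderiv : _root_.deriv (fun z => p.eval z) = fun z => p.derivative.eval z :=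
      _root_.funext fun _ => p.deriv
    rw [iteratedDeriv_succ', hderiv, ih, Function.iterate_succ_apply]

theorem iteratedDeriv_inv_sub_const (m : ℕ) (a z : 𝕜) :
    iteratedDeriv m (fun w => (w - a)⁻¹) z =
      (-1) ^ m * m.factorial * (z - a) ^ (-1 - m : ℤ) := by
  simp only [iteratedDeriv_comp_sub_const m Inv.inv a, iteratedDeriv_eq_iterate, iter_deriv_inv]

theorem Polynomial.logDeriv_eval_eq_sum_roots [IsAlgClosed 𝕜] (p : 𝕜[X]) {z : 𝕜}
    (hz : p.eval z ≠ 0) :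
    logDeriv (fun w => p.eval w) z = (p.roots.map fun a => (z - a)⁻¹).sum := by
  classical
  have hp : p ≠ 0 := by rintro rfl; simp at hz
  have hprod : (fun w => p.eval w) =
      fun w => p.leadingCoeff * ∏ a ∈ p.roots.toFinset, (w - a) ^ p.roots.count a := by
    refine _root_.funext fun w => ?_
    conv_lhs => rw [(IsAlgClosed.splits p).eq_prod_roots]
    simp only [Finset.prod_multiset_map_count, eval_mul, eval_C, eval_prod, eval_pow, eval_sub,
      eval_X]
  have hne : ∀ a ∈ p.roots.toFinset, z - a ≠ 0 := fun a ha =>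
    sub_ne_zero.mpr fun hza => hz (hza ▸ isRoot_of_mem_roots (Multiset.mem_toFinset.mp ha))
  rw [hprod, logDeriv_const_mul _ _ (leadingCoeff_ne_zero.mpr hp),
    logDeriv_prod (f := fun a w => (w - a) ^ p.roots.count a)
      (fun a ha => pow_ne_zero _ (hne a ha)) (fun a _ => by fun_prop),
    Finset.sum_multiset_map_count]
  refine Finset.sum_congr rfl fun a _ => ?_
  rw [logDeriv_fun_pow (by fun_prop), logDeriv_apply]
  simp

theorem iteratedDeriv_multiset_sum_inv_sub (s : Multiset 𝕜) {z : 𝕜} (hz : z ∉ s) (m : ℕ) :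
    iteratedDeriv m (fun w => (s.map fun a => (w - a)⁻¹).sum) z =
      (s.map fun a => (-1) ^ m * m.factorial * (z - a) ^ (-1 - m : ℤ)).sum := by
  classical
  have hsum (g : 𝕜 → 𝕜) : ∑ x ∈ s.toEnumFinset, g x.1 = (s.map g).sum := by
    rw [Finset.sum_eq_multiset_sum, ← Function.comp_def, ← Multiset.map_map,
      Multiset.map_toEnumFinset_fst]
  have hne (x : 𝕜 × ℕ) (hx : x ∈ s.toEnumFinset) : z - x.1 ≠ 0 :=
    sub_ne_zero.mpr fun h => hz (h ▸ Multiset.mem_of_mem_toEnumFinset hx)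
  simp only [← hsum]
  rw [iteratedDeriv_fun_sum fun x hx => by fun_prop (disch := exact hne x hx)]
  simp only [iteratedDeriv_inv_sub_const]

theorem HasFPowerSeriesAt.iteratedDeriv_eq_factorial_mul [CompleteSpace 𝕜] {F : 𝕜 → 𝕜}
    {a : ℕ → 𝕜} {x : 𝕜} (hF : HasFPowerSeriesAt F (FormalMultilinearSeries.ofScalars 𝕜 a) x)
    (k : ℕ) :
    iteratedDeriv k F x = k.factorial * a k := by
  obtain ⟨r, hr⟩ := hF
  rw [iteratedDeriv_eq_iteratedFDeriv, ← hr.factorial_smul 1 k,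
    FormalMultilinearSeries.ofScalars_apply_eq]
  simp [mul_comm]

end

theorem hasFPowerSeriesOnBall_ofScalars_of_hasSum {𝕜 : Type*} [RCLike 𝕜] {F : 𝕜 → 𝕜}
    {a : ℕ → 𝕜} {r : ℝ} (hr : 0 < r)
    (hF : ∀ z ∈ Metric.ball (0 : 𝕜) r, HasSum (fun k => a k * z ^ k) (F z)) :
    HasFPowerSeriesOnBall F (FormalMultilinearSeries.ofScalars 𝕜 a) 0 (ENNReal.ofReal r) := by
  refine ⟨ENNReal.le_of_forall_nnreal_lt fun t ht => ?_, by simpa using hr, fun hy => ?_⟩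
  · have ht : ((t : ℝ) : 𝕜) ∈ Metric.ball (0 : 𝕜) r := by
      rw [ENNReal.coe_lt_ofReal] at ht
      simpa using ht
    refine FormalMultilinearSeries.le_radius_of_tendsto _ (l := 0) ?_
    simpa [FormalMultilinearSeries.ofScalars_norm] using
      (hF _ ht).summable.tendsto_atTop_zero.norm
  · rw [Metric.eball_ofReal] at hy
    simpa [FormalMultilinearSeries.ofScalars_apply_eq, mul_comm] using hF _ hy

theorem sPow_eq_iteratedDeriv_logDeriv (f : ℂ[X]) (hf : f.eval 0 ≠ 0) {k : ℕ} (hk : 0 < k) :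
    sPow k f = -(1 / ((k - 1).factorial : ℂ)) *
      iteratedDeriv (k - 1) (logDeriv fun z => f.eval z) 0 := by
  obtain ⟨m, rfl⟩ : ∃ m, k = m + 1 := ⟨k - 1, by omega⟩
  have h0 : (0 : ℂ) ∉ f.roots := fun h => hf (isRoot_of_mem_roots h)
  have hev : (logDeriv fun z => f.eval z) =ᶠ[𝓝 0]
      fun w => (f.roots.map fun a => (w - a)⁻¹).sum := by
    filter_upwards [f.continuous.continuousAt.eventually_ne hf] with w hw
    exact f.logDeriv_eval_eq_sum_roots hw
  rw [Nat.add_sub_cancel, hev.iteratedDeriv_eq, iteratedDeriv_multiset_sum_inv_sub _ h0, sPow,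
    ← Multiset.sum_map_mul_left]
  refine congrArg Multiset.sum (Multiset.map_congr rfl fun a _ => ?_)
  have hm : (m.factorial : ℂ) ≠ 0 := Nat.cast_ne_zero.mpr m.factorial_ne_zero
  rw [zero_sub, show (-1 - m : ℤ) = -((m + 1 : ℕ) : ℤ) by push_cast; ring, zpow_neg, zpow_natCast,
    neg_pow a, mul_inv, ← inv_pow, ← inv_pow, inv_neg_one, pow_succ (-1 : ℂ)]
  field_simp
  rw [← pow_mul, pow_mul', neg_one_sq, one_pow, mul_one]

theorem sPow_eq_logDerivSeq (f : ℂ[X]) (hf : f.eval 0 ≠ 0) {k : ℕ} (hk : 0 < k) :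
    sPow k f = -(1 / ((k - 1).factorial : ℂ)) *
      logDerivSeq (fun m => (derivative^[m] f).eval 0) (k - 1) := by
  rw [sPow_eq_iteratedDeriv_logDeriv f hf hk,
    (AnalyticOnNhd.eval_polynomial f 0 (Set.mem_univ 0)).iteratedDeriv_logDeriv hf]
  simp only [f.iteratedDeriv_eval]

/-- Proposition 2.1: for a weakly convergent sequence of polynomials not vanishing at 0
with nonzero limit there, the power sums of inverse roots `s_k(f_n)` converge; if the
limit series represents an analytic function `F` near `0`, the limit of `s_k(f_n)` is
`-(1/(k-1)!) (F'/F)^{(k-1)}(0)`. -/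
theorem statement2 (f : ℕ → Polynomial ℂ) (a : ℕ → ℂ)
    (h0 : ∀ n, (f n).eval 0 ≠ 0)
    (hlim : ∃ L : ℂ, L ≠ 0 ∧ Tendsto (fun n => (f n).eval 0) atTop (𝓝 L))
    (hweak : WeakConv f a) :
    (∀ k : ℕ, 0 < k → ∃ L : ℂ, Tendsto (fun n => sPow k (f n)) atTop (𝓝 L)) ∧
    (∀ (F : ℂ → ℂ) (r : ℝ), 0 < r →
      (∀ z ∈ Metric.ball (0 : ℂ) r, HasSum (fun k => a k * z ^ k) (F z)) →
      ∀ k : ℕ, 0 < k →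
        Tendsto (fun n => sPow k (f n)) atTop
          (𝓝 (-(1 / ((k - 1).factorial : ℂ)) *
            iteratedDeriv (k - 1) (fun z => deriv F z / F z) 0))) := by
  obtain ⟨L, hL0, hL⟩ := hlim
  have ha0 : ((0 : ℕ).factorial : ℂ) * a 0 ≠ 0 := by
    rwa [← tendsto_nhds_unique hL (hweak 0)]
  have hlimit (k : ℕ) (hk : 0 < k) : Tendsto (fun n => sPow k (f n)) atTop
      (𝓝 (-(1 / ((k - 1).factorial : ℂ)) * logDerivSeq (fun m => m.factorial * a m) (k - 1))) := by
    simp only [sPow_eq_logDerivSeq _ (h0 _) hk]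
    exact (tendsto_logDerivSeq ha0 hweak (k - 1)).const_mul _
  refine ⟨fun k hk => ⟨_, hlimit k hk⟩, fun F r hr hF k hk => ?_⟩
  have hps := (hasFPowerSeriesOnBall_ofScalars_of_hasSum hr hF).hasFPowerSeriesAt
  have hF0 : F 0 ≠ 0 := by
    rwa [← iteratedDeriv_zero (f := F), hps.iteratedDeriv_eq_factorial_mul]
  change Tendsto _ _ (𝓝 (_ * iteratedDeriv (k - 1) (logDeriv F) 0))
  rw [hps.analyticAt.iteratedDeriv_logDeriv hF0,
    funext hps.iteratedDeriv_eq_factorial_mul]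
  exact hlimit k hk
end
end

section
/- For every positive integer N there exists a finite set Q of positive even integers with the following property: for any complex numbers z_1, …, z_N there is some q ∈ Q such that Re(z_j^q) ≥ 0 for all j = 1, …, N. -/
/-! If `w ^ a` and `w ^ b` (`a ≤ b`) lie in the same closed quadrant, then
`0 ≤ Re (w ^ b * conj (w ^ a)) = |w| ^ (2 * a) * Re (w ^ (b - a))`.
Applying pigeonhole to the `4 ^ N` quadrant patterns of `(z_j ^ 2)_j` raised to the exponents
`0, 1, …, 4 ^ N` gives a common pair `a < b`, so `Q = {2, 4, …, 2 * 4 ^ N}` works. -/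

noncomputable section
open Filter Polynomial Topology

def quadrant (z : ℂ) : Bool × Bool := (decide (0 ≤ z.re), decide (0 ≤ z.im))

lemma mul_nonneg_of_nonneg_iff {R : Type*} [Ring R] [LinearOrder R] [IsStrictOrderedRing R]
    {a b : R} (h : 0 ≤ a ↔ 0 ≤ b) : 0 ≤ a * b := by
  rcases le_or_gt 0 a with ha | ha
  · exact mul_nonneg ha (h.mp ha)
  · exact mul_nonneg_of_nonpos_of_nonpos ha.le (not_le.mp (mt h.mpr ha.not_ge)).le

lemma re_mul_conj_nonneg_of_quadrant_eq {u v : ℂ} (h : quadrant u = quadrant v) :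
    0 ≤ (u * (starRingEnd ℂ) v).re := by
  simp only [quadrant, Prod.mk.injEq, decide_eq_decide] at h
  simpa [Complex.mul_re] using add_nonneg (mul_nonneg_of_nonneg_iff h.1)
    (mul_nonneg_of_nonneg_iff h.2)

lemma re_pow_sub_nonneg_of_quadrant_eq {w : ℂ} {a b : ℕ} (hab : a ≤ b)
    (h : quadrant (w ^ b) = quadrant (w ^ a)) : 0 ≤ (w ^ (b - a)).re := by
  rcases eq_or_ne w 0 with rfl | hw
  · rw [zero_pow_eq]
    split_ifs <;> simp
  have hprod : w ^ b * (starRingEnd ℂ) (w ^ a) = w ^ (b - a) * (Complex.normSq w ^ a : ℝ) := by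
    rw [← Nat.sub_add_cancel hab, pow_add, Nat.add_sub_cancel, map_pow, mul_assoc, ← mul_pow,
      Complex.mul_conj, Complex.ofReal_pow]
  have hre := re_mul_conj_nonneg_of_quadrant_eq h
  rw [hprod, Complex.re_mul_ofReal] at hre
  exact nonneg_of_mul_nonneg_left hre (pow_pos (Complex.normSq_pos.mpr hw) a)

lemma exists_lt_quadrant_pow_eq {ι : Type*} [Fintype ι] [DecidableEq ι] (z : ι → ℂ) :
    ∃ a b : ℕ, a < b ∧ b ≤ 4 ^ Fintype.card ι ∧
      ∀ j, quadrant (z j ^ b) = quadrant (z j ^ a) := by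
  have hcard : Fintype.card (ι → Bool × Bool) < Fintype.card (Fin (4 ^ Fintype.card ι + 1)) := by
    simp
  obtain ⟨m, n, hmn, heq⟩ := Fintype.exists_ne_map_eq_of_card_lt
    (fun m : Fin (4 ^ Fintype.card ι + 1) => fun j => quadrant (z j ^ (m : ℕ))) hcard
  rcases Fin.lt_or_lt_of_ne hmn with hlt | hlt
  · exact ⟨m, n, hlt, Nat.lt_succ_iff.mp n.isLt, fun j => (congrFun heq j).symm⟩
  · exact ⟨n, m, hlt, Nat.lt_succ_iff.mp m.isLt, fun j => congrFun heq j⟩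

theorem statement9_general (N : ℕ) :
    ∃ Q : Finset ℕ, (∀ q ∈ Q, 0 < q ∧ Even q) ∧
      ∀ z : Fin N → ℂ, ∃ q ∈ Q, ∀ j, 0 ≤ ((z j) ^ q).re := by
  refine ⟨(Finset.Icc 1 (4 ^ N)).image (2 * ·), ?_, fun z => ?_⟩
  · simp only [Finset.mem_image, Finset.mem_Icc]
    rintro _ ⟨k, ⟨hk, -⟩, rfl⟩
    exact ⟨by omega, even_two_mul k⟩
  obtain ⟨a, b, hab, hb, hquad⟩ := exists_lt_quadrant_pow_eq (fun j => z j ^ 2)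
  rw [Fintype.card_fin] at hb
  refine ⟨2 * (b - a), Finset.mem_image_of_mem _ (Finset.mem_Icc.mpr ⟨by omega, by omega⟩),
    fun j => ?_⟩
  rw [pow_mul]
  exact re_pow_sub_nonneg_of_quadrant_eq hab.le (hquad j)

/-- Proposition 2.6: for every `N` there is a finite set `Q` of positive even integers
such that any `N` complex numbers admit some `q ∈ Q` with all `q`-th powers in the
closed right half plane. -/
theorem statement9 (N : ℕ) (hN : 0 < N) :
    ∃ Q : Finset ℕ, (∀ q ∈ Q, 0 < q ∧ Even q) ∧
      ∀ z : Fin N → ℂ, ∃ q ∈ Q, ∀ j, 0 ≤ ((z j) ^ q).re :=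
  statement9_general N
end
end

section
/- If f is a polynomial with real coefficients, then for every nonnegative integer n, N(J(f,n); ℂ∖S_0) ≤ N(f; ℂ∖S_0), i.e. the number of zeros of the n-th Jensen polynomial of f lying outside the nonnegative real axis (counted with multiplicity) is at most the corresponding number for f. -/
/-!
The Jensen polynomial `J_n(f)` is the reversal `z ^ n A_n(f)(1 / z)` of the Appell polynomial
`A_n(f) = f(D) z ^ n`, `D = d/dz`, and reversal does not increase the number of zeros off
`[0, ∞)`, a set that avoids `0` and is stable under `z ↦ z⁻¹`.

For `A_n(f)` we induct on the nonnegative zeros of `f`, using that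
`N(h; ℂ \ [0, ∞)) = deg h - #(nonnegative zeros of h)` for real `h`. Writing `f = (z - r) g`
with `r ≥ 0` gives `A_n(f) = (D - r) A_n(g)`. For `r > 0`, Rolle's theorem for `e^{-rx} h(x)`,
which also tends to `0` at `+∞`, shows that `h' - r h` has at least as many nonnegative zeros as
`h` and no larger degree; for `r = 0` the derivative loses at most one nonnegative zero, but also
a degree. When `f` has no nonnegative zeros, `N(f; ℂ \ [0, ∞)) = deg f`, and `A_n(f)` vanishes
to order `n - deg f` at `0`, which bounds its count by `deg f`.
-/

noncomputable section
open Filter Polynomial Topology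

lemma Multiset.card_le_card_add_of_count_le_succ {α : Type*} [DecidableEq α] {s t : Multiset α}
    {c : ℕ} (hcount : ∀ x ∈ s, s.count x ≤ t.count x + 1)
    (hcard : s.toFinset.card ≤ (t.toFinset \ s.toFinset).card + c) :
    Multiset.card s ≤ Multiset.card t + c := by
  calc Multiset.card s = ∑ x ∈ s.toFinset, s.count x := (Multiset.toFinset_sum_count_eq s).symm
    _ ≤ ∑ x ∈ s.toFinset, (t.count x + 1) :=
        Finset.sum_le_sum fun x hx => hcount x (Multiset.mem_toFinset.1 hx)
    _ ≤ ∑ x ∈ s.toFinset, t.count x + ((t.toFinset \ s.toFinset).card + c) := by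
        rw [Finset.sum_add_distrib, Finset.sum_const, smul_eq_mul, mul_one]
        gcongr
    _ ≤ ∑ x ∈ s.toFinset, t.count x + (∑ x ∈ t.toFinset \ s.toFinset, t.count x + c) := by
        rw [Finset.card_eq_sum_ones]
        gcongr with x hx
        exact Multiset.one_le_count_iff_mem.2 (Multiset.mem_toFinset.1 (Finset.mem_sdiff.1 hx).1)
    _ = ∑ x ∈ s.toFinset ∪ t.toFinset, t.count x + c := by
        rw [← add_assoc, ← Finset.sum_union Finset.disjoint_sdiff, Finset.union_sdiff_self_eq_union]
    _ = Multiset.card t + c := by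
        rw [← Finset.sum_subset Finset.subset_union_right fun x _ hx =>
          Multiset.count_eq_zero.2 (mt Multiset.mem_toFinset.2 hx), Multiset.toFinset_sum_count_eq]

lemma Finset.card_le_card_sdiff_of_interleaved_of_lt {α : Type*} [LinearOrder α]
    {s t : Finset α} (h : ∀ x ∈ s, ∀ y ∈ s, x < y → ∃ w ∈ t, x < w ∧ w < y) {z : α}
    (hz : z ∈ t) (hsz : ∀ x ∈ s, x < z) : s.card ≤ (t \ s).card := by
  have hzts : z ∈ t \ s := Finset.mem_sdiff.2 ⟨hz, fun hzs => lt_irrefl z (hsz z hzs)⟩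
  rw [← Finset.card_erase_add_one hzts, ← Finset.erase_sdiff_comm]
  refine Finset.card_le_sdiff_of_interleaved fun x hx y hy hxy _ => ?_
  obtain ⟨w, hw, hxw, hwy⟩ := h x hx y hy hxy
  exact ⟨w, Finset.mem_erase.2 ⟨(hwy.trans (hsz y hy)).ne, hw⟩, hxw, hwy⟩

lemma rootMultiplicity_le_rootMultiplicity_derivative_sub_C_mul_add_one {R : Type*} [CommRing R]
    [IsDomain R] [CharZero R] {p : R[X]} {c : R} (hq : derivative p - C c * p ≠ 0) (x : R) :
    p.rootMultiplicity x ≤ (derivative p - C c * p).rootMultiplicity x + 1 := by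
  have hdvd : (X - C x) ^ (p.rootMultiplicity x - 1) ∣ derivative p - C c * p :=
    dvd_sub ((pow_dvd_pow _ (rootMultiplicity_sub_one_le_derivative_rootMultiplicity p x)).trans
        (pow_rootMultiplicity_dvd _ x))
      (((pow_dvd_pow _ tsub_le_self).trans (pow_rootMultiplicity_dvd p x)).mul_left _)
  have := (le_rootMultiplicity_iff hq).2 hdvd
  omega

lemma derivative_sub_C_mul_ne_zero {R : Type*} [CommRing R] [IsDomain R] [CharZero R]
    {p : R[X]} (hp : p ≠ 0) {c : R} (hc : c ≠ 0) : derivative p - C c * p ≠ 0 := by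
  rw [sub_ne_zero]
  intro h
  have := degree_derivative_lt hp
  rw [h, degree_C_mul hc] at this
  exact lt_irrefl _ this

section Reflect

variable {R : Type*}

lemma reflect_pow [Semiring R] {p : R[X]} {N : ℕ} (hp : p.natDegree ≤ N) (m : ℕ) :
    reflect (m * N) (p ^ m) = reflect N p ^ m := by
  induction m with
  | zero => simp
  | succ m ih =>
    rw [pow_succ, pow_succ, Nat.succ_mul, reflect_mul _ _ (natDegree_pow_le_of_le m hp) hp, ih]

lemma reflect_X_sub_C_pow [Ring R] (a : R) (m : ℕ) :
    reflect m ((X - C a) ^ m) = (1 - C a * X) ^ m := by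
  simpa [reflect_sub, reflect_C] using reflect_pow (natDegree_X_sub_C_le (R := R) a) m

lemma rootMultiplicity_le_rootMultiplicity_reflect_inv [Field R] {p : R[X]} {n : ℕ}
    (hp : p.natDegree ≤ n) {a : R} (ha : a ≠ 0) :
    p.rootMultiplicity a ≤ (reflect n p).rootMultiplicity a⁻¹ := by
  rcases eq_or_ne p 0 with rfl | hp0
  · simp
  set m := p.rootMultiplicity a
  obtain ⟨q, hq⟩ := p.pow_rootMultiplicity_dvd a
  have hq0 : q ≠ 0 := by rintro rfl; exact hp0 (by simpa using hq)
  have hdeg : m + q.natDegree = p.natDegree := by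
    rw [hq, natDegree_mul (pow_ne_zero _ (X_sub_C_ne_zero a)) hq0, natDegree_pow,
      natDegree_X_sub_C, mul_one]
  obtain ⟨k, rfl⟩ : ∃ k, n = m + k := ⟨n - m, by omega⟩
  have hfac : 1 - C a * X = C (-a) * (X - C a⁻¹) := by
    simp only [mul_sub, ← C_mul, neg_mul, mul_inv_cancel₀ ha, C_neg, C_1]
    ring
  refine (le_rootMultiplicity_iff (by rwa [Ne, reflect_eq_zero_iff])).2
    ⟨C (-a) ^ m * reflect k q, ?_⟩
  rw [hq, reflect_mul _ _ (natDegree_pow_le_of_le m (natDegree_X_sub_C_le a) |>.trans (by simp))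
    (by omega), reflect_X_sub_C_pow, hfac, mul_pow]
  ring

end Reflect

section ExpWeighted

variable (p : ℝ[X]) {r : ℝ}

lemma hasDerivAt_eval_mul_exp (t : ℝ) :
    HasDerivAt (fun t => p.eval t * Real.exp (-r * t))
      ((derivative p - C r * p).eval t * Real.exp (-r * t)) t := by
  refine ((p.hasDerivAt t).mul ((hasDerivAt_id' t).const_mul (-r)).exp).congr_deriv ?_
  simp only [eval_sub, eval_mul, eval_C]
  ring

lemma exists_isRoot_derivative_sub_C_mul_mem_Ioo {a b : ℝ} (hab : a < b)
    (h : p.eval a * Real.exp (-r * a) = p.eval b * Real.exp (-r * b)) :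
    ∃ z ∈ Set.Ioo a b, (derivative p - C r * p).IsRoot z := by
  obtain ⟨z, hz, hz0⟩ := exists_hasDerivAt_eq_zero hab (by fun_prop) h
    fun t _ => hasDerivAt_eval_mul_exp p t
  exact ⟨z, hz, (mul_eq_zero.1 hz0).resolve_right (Real.exp_ne_zero _)⟩

lemma tendsto_eval_mul_exp_atTop (hr : 0 < r) :
    Tendsto (fun t => p.eval t * Real.exp (-r * t)) atTop (𝓝 0) := by
  have hO : (fun t => p.eval t) =O[atTop] fun t => t ^ p.natDegree := by
    simpa using isBigO_atTop_of_degree_le (P := p) (Q := X ^ p.natDegree) (by simp)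
  simpa [Real.exp_neg, div_eq_mul_inv] using
    (hO.trans_isLittleO (isLittleO_pow_exp_pos_mul_atTop _ hr)).tendsto_div_nhds_zero

lemma exists_isRoot_derivative_sub_C_mul_gt (hp : p ≠ 0) (hr : 0 < r) {x : ℝ}
    (hx : p.IsRoot x) : ∃ z, x < z ∧ (derivative p - C r * p).IsRoot z := by
  set g := fun t => p.eval t * Real.exp (-r * t) with hg
  have hgc : Continuous g := by fun_prop
  obtain ⟨y, hy, hxy⟩ := ((p.eventually_atTop_not_isRoot hp).and (eventually_gt_atTop x)).exists
  set c := g y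
  have hc : c ≠ 0 := mul_ne_zero hy (Real.exp_ne_zero _)
  obtain ⟨w, hw, hyw⟩ := (((tendsto_eval_mul_exp_atTop p hr).eventually
    (Metric.ball_mem_nhds 0 (half_pos (abs_pos.2 hc)))).and (eventually_gt_atTop y)).exists
  replace hw : |g w| < |c| / 2 := by rwa [Real.dist_eq, sub_zero] at hw
  -- `g x = 0`, `g y = c` and `|g w| < |c| / 2`, so `g` takes the value `c / 2` on both sides of `y`
  have hgx : g x = 0 := by simp [hg, hx.eq_zero]
  obtain ⟨a, ha, hga⟩ : c / 2 ∈ g '' Set.uIcc x y := by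
    refine intermediate_value_uIcc hgc.continuousOn ?_
    rw [hgx, Set.mem_uIcc]
    rcases abs_cases c with ⟨-, hc'⟩ | ⟨-, hc'⟩ <;> [left; right] <;> constructor <;> linarith
  obtain ⟨b, hb, hgb⟩ : c / 2 ∈ g '' Set.uIcc y w := by
    refine intermediate_value_uIcc hgc.continuousOn ?_
    rw [Set.mem_uIcc]
    rcases abs_cases c with ⟨hca, hc'⟩ | ⟨hca, hc'⟩ <;> rw [hca] at hw <;>
      [right; left] <;> constructor <;> linarith [abs_lt.1 hw]
  rw [Set.uIcc_of_lt hxy] at ha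
  rw [Set.uIcc_of_lt hyw] at hb
  have hax : x < a := ha.1.lt_of_ne (by rintro rfl; rw [hgx] at hga; exact hc (by linarith))
  have hyb : y < b := hb.1.lt_of_ne (by rintro rfl; exact hc (by change c = c / 2 at hgb; linarith))
  obtain ⟨z, hz, hzq⟩ := exists_isRoot_derivative_sub_C_mul_mem_Ioo p (ha.2.trans_lt hyb)
    (hga.trans hgb.symm)
  exact ⟨z, hax.trans hz.1, hzq⟩

end ExpWeighted

def nonnegRoots (p : ℝ[X]) : Multiset ℝ := p.roots.filter (0 ≤ ·)

lemma mem_nonnegRoots {p : ℝ[X]} {x : ℝ} :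
    x ∈ nonnegRoots p ↔ p ≠ 0 ∧ p.IsRoot x ∧ 0 ≤ x := by
  rw [nonnegRoots, Multiset.mem_filter, mem_roots', and_assoc]

lemma count_nonnegRoots {p : ℝ[X]} {x : ℝ} (hx : 0 ≤ x) :
    (nonnegRoots p).count x = p.rootMultiplicity x := by
  rw [nonnegRoots, Multiset.count_filter_of_pos hx, count_roots]

lemma nonnegRoots_X_sub_C_mul {u : ℝ[X]} (hu : u ≠ 0) {r : ℝ} (hr : 0 ≤ r) :
    nonnegRoots ((X - C r) * u) = r ::ₘ nonnegRoots u := by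
  rw [nonnegRoots, roots_mul (mul_ne_zero (X_sub_C_ne_zero r) hu), roots_X_sub_C,
    Multiset.singleton_add, Multiset.filter_cons_of_pos _ hr, nonnegRoots]

lemma le_card_nonnegRoots_of_X_pow_dvd {p : ℝ[X]} (hp : p ≠ 0) {k : ℕ} (h : X ^ k ∣ p) :
    k ≤ Multiset.card (nonnegRoots p) := by
  have hk : k ≤ p.rootMultiplicity 0 := (le_rootMultiplicity_iff hp).2 (by simpa using h)
  rw [← count_nonnegRoots le_rfl] at hk
  exact hk.trans (Multiset.count_le_card _ _)

lemma ofReal_mem_S0 {x : ℝ} : (x : ℂ) ∈ S0 ↔ 0 ≤ x := by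
  simp [S0]

lemma zero_mem_S0 : (0 : ℂ) ∈ S0 := ofReal_mem_S0.2 le_rfl

lemma inv_mem_S0 {z : ℂ} (hz : z ∈ S0) : z⁻¹ ∈ S0 := by
  obtain ⟨him, hre⟩ := hz
  exact ⟨by simp [him], by simpa [Complex.inv_re] using div_nonneg hre (Complex.normSq_nonneg z)⟩

open scoped Classical in
lemma filter_mem_S0_roots_map (p : ℝ[X]) :
    (p.map (algebraMap ℝ ℂ)).roots.filter (· ∈ S0) = (nonnegRoots p).map (algebraMap ℝ ℂ) := by
  have hrange : ∀ z ∈ S0, z ∈ (algebraMap ℝ ℂ).range := fun z hz =>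
    ⟨z.re, Complex.ext (by simp) (by simp [hz.1])⟩
  calc (p.map (algebraMap ℝ ℂ)).roots.filter (· ∈ S0)
      = ((p.map (algebraMap ℝ ℂ)).roots.filter (· ∈ (algebraMap ℝ ℂ).range)).filter (· ∈ S0) := by
        rw [Multiset.filter_filter]
        exact Multiset.filter_congr fun z _ => ⟨fun hz => ⟨hz, hrange z hz⟩, And.left⟩
    _ = (p.roots.filter (fun x : ℝ => (x : ℂ) ∈ S0)).map (algebraMap ℝ ℂ) := by
        rw [filter_roots_map_range_eq_map_roots (algebraMap ℝ ℂ).injective, Multiset.filter_map]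
        rfl
    _ = (nonnegRoots p).map (algebraMap ℝ ℂ) := by
        rw [nonnegRoots]
        congr 1
        exact Multiset.filter_congr fun x _ => ofReal_mem_S0

lemma NPolyR_compl_S0_add_card_nonnegRoots (p : ℝ[X]) :
    NPolyR p S0ᶜ + Multiset.card (nonnegRoots p) = p.natDegree := by
  classical
  have hcard :=
    IsAlgClosed.card_roots_map_eq_natDegree_of_injective p (algebraMap ℝ ℂ).injective
  rw [← Multiset.filter_add_not (· ∈ S0) (p.map (algebraMap ℝ ℂ)).roots,
    filter_mem_S0_roots_map] at hcard
  rw [NPolyR, NPoly, ← hcard, Multiset.card_add, Multiset.card_map, add_comm]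
  congr 2
  simp only [Set.mem_compl_iff]

lemma NPolyR_X_sub_C_mul {u : ℝ[X]} (hu : u ≠ 0) {r : ℝ} (hr : 0 ≤ r) :
    NPolyR ((X - C r) * u) S0ᶜ = NPolyR u S0ᶜ := by
  have hf := NPolyR_compl_S0_add_card_nonnegRoots ((X - C r) * u)
  have hu' := NPolyR_compl_S0_add_card_nonnegRoots u
  rw [nonnegRoots_X_sub_C_mul hu hr, Multiset.card_cons,
    natDegree_mul (X_sub_C_ne_zero r) hu, natDegree_X_sub_C] at hf
  omega

section NonnegRoots

variable {p : ℝ[X]} {r : ℝ}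

lemma card_nonnegRoots_le_derivative_sub_C_mul_add (hq : derivative p - C r * p ≠ 0) {c : ℕ}
    (hcard : (nonnegRoots p).toFinset.card ≤
      ((nonnegRoots (derivative p - C r * p)).toFinset \ (nonnegRoots p).toFinset).card + c) :
    Multiset.card (nonnegRoots p) ≤ Multiset.card (nonnegRoots (derivative p - C r * p)) + c := by
  refine Multiset.card_le_card_add_of_count_le_succ (fun x hx => ?_) hcard
  have hx0 := (mem_nonnegRoots.1 hx).2.2
  rw [count_nonnegRoots hx0, count_nonnegRoots hx0]
  exact rootMultiplicity_le_rootMultiplicity_derivative_sub_C_mul_add_one hq x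

lemma exists_mem_nonnegRoots_derivative_sub_C_mul (hq : derivative p - C r * p ≠ 0) {x y : ℝ}
    (hx : x ∈ nonnegRoots p) (hy : y ∈ nonnegRoots p) (hxy : x < y) :
    ∃ z ∈ nonnegRoots (derivative p - C r * p), x < z ∧ z < y := by
  obtain ⟨-, hx, hx0⟩ := mem_nonnegRoots.1 hx
  obtain ⟨z, hz, hzq⟩ := exists_isRoot_derivative_sub_C_mul_mem_Ioo p hxy
    (by simp [hx.eq_zero, (mem_nonnegRoots.1 hy).2.1.eq_zero])
  exact ⟨z, mem_nonnegRoots.2 ⟨hq, hzq, hx0.trans hz.1.le⟩, hz⟩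

variable (p)

lemma card_nonnegRoots_le_derivative :
    Multiset.card (nonnegRoots p) ≤ Multiset.card (nonnegRoots (derivative p)) + 1 := by
  rcases eq_or_ne (derivative p) 0 with hp' | hp'
  · rw [eq_C_of_derivative_eq_zero hp']
    simp [nonnegRoots]
  have hq : derivative p - C 0 * p ≠ 0 := by simpa using hp'
  simpa using card_nonnegRoots_le_derivative_sub_C_mul_add hq
    (Finset.card_le_sdiff_of_interleaved fun x hx y hy hxy _ => by
      simpa using exists_mem_nonnegRoots_derivative_sub_C_mul hq
        (Multiset.mem_toFinset.1 hx) (Multiset.mem_toFinset.1 hy) hxy)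

lemma card_nonnegRoots_le_derivative_sub_C_mul (hr : 0 < r) :
    Multiset.card (nonnegRoots p) ≤ Multiset.card (nonnegRoots (derivative p - C r * p)) := by
  rcases eq_or_ne p 0 with rfl | hp
  · simp [nonnegRoots]
  have hq := derivative_sub_C_mul_ne_zero hp hr.ne'
  rcases (nonnegRoots p).toFinset.eq_empty_or_nonempty with hS | hS
  · simp [Multiset.toFinset_eq_empty.1 hS]
  set S := (nonnegRoots p).toFinset
  obtain ⟨-, hmax, hmax0⟩ := mem_nonnegRoots.1 (Multiset.mem_toFinset.1 (S.max'_mem hS))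
  obtain ⟨z, hz, hzq⟩ := exists_isRoot_derivative_sub_C_mul_gt p hp hr hmax
  have hzT : z ∈ (nonnegRoots (derivative p - C r * p)).toFinset :=
    Multiset.mem_toFinset.2 (mem_nonnegRoots.2 ⟨hq, hzq, hmax0.trans hz.le⟩)
  simpa using card_nonnegRoots_le_derivative_sub_C_mul_add (c := 0) hq
    (Finset.card_le_card_sdiff_of_interleaved_of_lt (fun x hx y hy hxy => by
        simpa using exists_mem_nonnegRoots_derivative_sub_C_mul hq
          (Multiset.mem_toFinset.1 hx) (Multiset.mem_toFinset.1 hy) hxy)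
      hzT fun x hx => (S.le_max' x hx).trans_lt hz)

end NonnegRoots

lemma NPolyR_derivative_sub_C_mul_le (p : ℝ[X]) {r : ℝ} (hr : 0 ≤ r) :
    NPolyR (derivative p - C r * p) S0ᶜ ≤ NPolyR p S0ᶜ := by
  have hp := NPolyR_compl_S0_add_card_nonnegRoots p
  have hq := NPolyR_compl_S0_add_card_nonnegRoots (derivative p - C r * p)
  rcases hr.eq_or_lt with rfl | hr
  · simp only [map_zero, zero_mul, sub_zero] at hq ⊢
    have := card_nonnegRoots_le_derivative p
    have := natDegree_derivative_le p
    omega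
  · have := card_nonnegRoots_le_derivative_sub_C_mul p hr
    have : (derivative p - C r * p).natDegree ≤ p.natDegree :=
      (natDegree_sub_le _ _).trans
        (max_le ((natDegree_derivative_le p).trans tsub_le_self) (natDegree_C_mul_le _ _))
    omega

lemma appellR_coeff_eq_aeval_derivative (f : ℝ[X]) (n : ℕ) :
    appellR f.coeff n = aeval (derivative : Module.End ℝ ℝ[X]) f (X ^ n) := by
  set N := n + f.natDegree + 1
  calc appellR f.coeff n
      = ∑ k ∈ Finset.range (n + 1), C (f.coeff k * n.descFactorial k) * X ^ (n - k) := by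
        refine Finset.sum_congr rfl fun k hk => ?_
        rw [← Nat.factorial_mul_descFactorial (Finset.mem_range_succ_iff.1 hk)]
        push_cast
        field_simp
    _ = ∑ k ∈ Finset.range N, C (f.coeff k * n.descFactorial k) * X ^ (n - k) :=
        Finset.sum_subset (Finset.range_subset_range.2 (by omega)) fun k _ hk => by
          rw [Nat.descFactorial_eq_zero_iff_lt.2 (by simpa using hk)]
          simp
    _ = aeval (derivative : Module.End ℝ ℝ[X]) f (X ^ n) := by
        rw [aeval_eq_sum_range' (by omega : f.natDegree < N), LinearMap.sum_apply]
        refine Finset.sum_congr rfl fun k _ => ?_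
        rw [LinearMap.smul_apply, Module.End.pow_apply, iterate_derivative_X_pow_eq_C_mul,
          smul_eq_C_mul, ← mul_assoc, ← C_mul]

lemma appellR_X_sub_C_mul (u : ℝ[X]) (r : ℝ) (n : ℕ) :
    appellR ((X - C r) * u).coeff n =
      derivative (appellR u.coeff n) - C r * appellR u.coeff n := by
  simp only [appellR_coeff_eq_aeval_derivative, map_mul, map_sub, aeval_X, aeval_C,
    Module.End.mul_apply, LinearMap.sub_apply, Module.algebraMap_end_apply, smul_eq_C_mul]

lemma natDegree_appellR_le (a : ℕ → ℝ) (n : ℕ) : (appellR a n).natDegree ≤ n :=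
  natDegree_sum_le_of_forall_le _ _ fun _ _ => (natDegree_C_mul_X_pow_le _ _).trans tsub_le_self

lemma X_pow_sub_natDegree_dvd_appellR (f : ℝ[X]) (n : ℕ) :
    X ^ (n - f.natDegree) ∣ appellR f.coeff n := by
  refine Finset.dvd_sum fun k _ => ?_
  rcases le_or_gt k f.natDegree with hk | hk
  · exact (pow_dvd_pow X (by omega)).mul_left _
  · simp [coeff_eq_zero_of_natDegree_lt hk]

lemma NPolyR_appellR_le_of_nonnegRoots_eq_zero {f : ℝ[X]} (hf : nonnegRoots f = 0) (n : ℕ) :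
    NPolyR (appellR f.coeff n) S0ᶜ ≤ NPolyR f S0ᶜ := by
  have hNf := NPolyR_compl_S0_add_card_nonnegRoots f
  rw [hf, Multiset.card_zero, add_zero] at hNf
  rcases eq_or_ne (appellR f.coeff n) 0 with hA | hA
  · simp [hA, NPolyR, NPoly]
  have hNA := NPolyR_compl_S0_add_card_nonnegRoots (appellR f.coeff n)
  have := le_card_nonnegRoots_of_X_pow_dvd hA (X_pow_sub_natDegree_dvd_appellR f n)
  have := natDegree_appellR_le f.coeff n
  omega

theorem NPolyR_appellR_le (f : ℝ[X]) (n : ℕ) :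
    NPolyR (appellR f.coeff n) S0ᶜ ≤ NPolyR f S0ᶜ := by
  induction hk : Multiset.card (nonnegRoots f) generalizing f with
  | zero => exact NPolyR_appellR_le_of_nonnegRoots_eq_zero (Multiset.card_eq_zero.1 hk) n
  | succ k ih =>
    obtain ⟨r, hr⟩ := Multiset.card_pos_iff_exists_mem.1
      (show 0 < Multiset.card (nonnegRoots f) by omega)
    obtain ⟨hf, hroot, hr0⟩ := mem_nonnegRoots.1 hr
    obtain ⟨u, rfl⟩ : ∃ u, f = (X - C r) * u := ⟨_, (mul_divByMonic_eq_iff_isRoot.2 hroot).symm⟩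
    have hu : u ≠ 0 := right_ne_zero_of_mul hf
    rw [appellR_X_sub_C_mul, NPolyR_X_sub_C_mul hu hr0]
    refine (NPolyR_derivative_sub_C_mul_le _ hr0).trans (ih u ?_)
    simpa [nonnegRoots_X_sub_C_mul hu hr0] using hk

lemma NPoly_reflect_le {s : Set ℂ} (hs0 : 0 ∉ s) (hs : ∀ z ∈ s, z⁻¹ ∈ s) {p : ℂ[X]} {n : ℕ}
    (hp : p.natDegree ≤ n) : NPoly (reflect n p) s ≤ NPoly p s := by
  classical
  rw [NPoly, NPoly, ← Multiset.card_map (·⁻¹)]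
  refine Multiset.card_le_card (Multiset.le_iff_count.2 fun z => ?_)
  have hinv : (((reflect n p).roots.filter (· ∈ s)).map (·⁻¹)).count z =
      ((reflect n p).roots.filter (· ∈ s)).count z⁻¹ := by
    simpa using Multiset.count_map_eq_count' (·⁻¹) _ inv_injective z⁻¹
  rw [hinv, Multiset.count_filter, Multiset.count_filter]
  split_ifs with hz hz'
  · rw [count_roots, count_roots]
    simpa using rootMultiplicity_le_rootMultiplicity_reflect_inv
      (natDegree_reflect_le.trans (max_le le_rfl hp)) (fun h => hs0 (h ▸ hz) : z⁻¹ ≠ 0)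
  · exact absurd (by simpa using hs _ hz) hz'
  all_goals exact Nat.zero_le _

lemma jensenR_eq_reflect_appellR (a : ℕ → ℝ) (n : ℕ) : jensenR a n = reflect n (appellR a n) := by
  rw [appellR, ← AddMonoidHom.mk'_apply (reflect n) fun p q => reflect_add p q n, map_sum]
  refine Finset.sum_congr rfl fun k hk => ?_
  rw [AddMonoidHom.mk'_apply, reflect_C_mul_X_pow, revAt_le (by omega),
    Nat.sub_sub_self (Finset.mem_range_succ_iff.1 hk)]

/-- Proposition 3.1 (second part): the Jensen polynomials of a real polynomial have at
most as many zeros outside `[0,∞)` as the polynomial itself. -/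
theorem statement11 (f : Polynomial ℝ) (n : ℕ) :
    NPolyR (jensenR (fun k => f.coeff k) n) S0ᶜ ≤ NPolyR f S0ᶜ := by
  calc NPolyR (jensenR f.coeff n) S0ᶜ
      = NPoly (reflect n ((appellR f.coeff n).map (algebraMap ℝ ℂ))) S0ᶜ := by
        rw [NPolyR, jensenR_eq_reflect_appellR, reflect_map]
    _ ≤ NPolyR (appellR f.coeff n) S0ᶜ :=
        NPoly_reflect_le (s := S0ᶜ) (fun h => h zero_mem_S0)
          (fun z hz h => hz (by simpa using inv_mem_S0 h))
          (natDegree_map_le.trans (natDegree_appellR_le _ _))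
    _ ≤ NPolyR f S0ᶜ := NPolyR_appellR_le f n
end
end

section
/- If f is a polynomial all of whose zeros lie in ℍ, then for every nonnegative integer n, all zeros of the n-th Jensen polynomial J(f,n) lie in ℍ. -/
noncomputable section
open Filter Polynomial Topology

/-! With `D = d/dx`, the Jensen polynomial `J(f,n)` is the reversal `zⁿ (f(D) xⁿ)(1/z)`.
Factor `f = c ∏ (X - a)` with `Im a ≥ 0`. Each operator `D - a` preserves the class of polynomials
with all zeros in the closed lower half-plane: at a zero `z` of `p' - a p` with `Im z > 0` and
`p(z) ≠ 0`, `a = p'(z)/p(z) = ∑ 1/(z - w)` over the zeros `w` of `p`, and every term has negative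
imaginary part. Starting from `xⁿ`, all zeros of `f(D) xⁿ` lie in `Im ≤ 0`, and `z ↦ 1/z` maps
them back into the closed upper half-plane. -/

namespace Polynomial

theorem im_sum_one_div_sub_neg {s : Multiset ℂ} (hs : s ≠ 0) {z : ℂ}
    (hz : ∀ a ∈ s, a.im < z.im) : ((s.map fun a => 1 / (z - a)).sum).im < 0 := by
  change Complex.imAddGroupHom _ < 0
  rw [map_multiset_sum, Multiset.map_map]
  calc (s.map (Complex.imAddGroupHom ∘ fun a => 1 / (z - a))).sum
      < (s.map fun _ => (0 : ℝ)).sum := by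
        refine Multiset.sum_lt_sum_of_nonempty (by simpa using hs) fun a ha => ?_
        have hza : 0 < (z - a).im := by simpa using hz a ha
        have hza0 : z - a ≠ 0 := fun h => by simp [h] at hza
        change (1 / (z - a)).im < 0
        rw [one_div, Complex.inv_im]
        exact div_neg_of_neg_of_pos (by linarith) (Complex.normSq_pos.mpr hza0)
    _ = 0 := by simp

theorem roots_derivative_sub_C_mul_im_nonpos {p : ℂ[X]} {ρ : ℂ} (hρ : 0 ≤ ρ.im)
    (hp : ∀ a ∈ p.roots, a.im ≤ 0) : ∀ z ∈ (derivative p - C ρ * p).roots, z.im ≤ 0 := by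
  intro z hz
  by_contra! hz_im
  obtain ⟨hq, hqz⟩ := mem_roots'.mp hz
  have hp0 : p ≠ 0 := by rintro rfl; simp at hq
  have hpz : p.eval z ≠ 0 := fun h => (hp z (mem_roots'.mpr ⟨hp0, h⟩)).not_gt hz_im
  have hρ_eq : ρ = (p.roots.map fun a => 1 / (z - a)).sum := by
    rw [← (IsAlgClosed.splits p).eval_derivative_div_eval_of_ne_zero hpz, eq_div_iff hpz]
    have := hqz.eq_zero
    rw [eval_sub, eval_mul, eval_C] at this
    linear_combination -this
  rcases eq_or_ne p.roots 0 with hroots | hroots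
  · have hdeg : p.natDegree = 0 := by
      rw [(IsAlgClosed.splits p).natDegree_eq_card_roots, hroots, Multiset.card_zero]
    rw [eq_C_of_natDegree_eq_zero hdeg, hρ_eq, hroots] at hq
    simp at hq
  · exact hρ.not_gt (hρ_eq ▸ im_sum_one_div_sub_neg hroots fun a ha => (hp a ha).trans_lt hz_im)

theorem aeval_derivative_X_sub_C_mul_apply {R : Type*} [CommRing R] (a : R) (g p : R[X]) :
    aeval (derivative : Module.End R R[X]) ((X - C a) * g) p =
      derivative (aeval (derivative : Module.End R R[X]) g p) -
        C a * aeval (derivative : Module.End R R[X]) g p := by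
  rw [map_mul, Module.End.mul_apply, map_sub, aeval_X, aeval_C, LinearMap.sub_apply,
    Module.algebraMap_end_apply, smul_eq_C_mul]

theorem roots_aeval_derivative_im_nonpos {g p : ℂ[X]} (hg : ∀ a ∈ g.roots, 0 ≤ a.im)
    (hp : ∀ z ∈ p.roots, z.im ≤ 0) :
    ∀ z ∈ (aeval (derivative : Module.End ℂ ℂ[X]) g p).roots, z.im ≤ 0 := by
  have h_prod : ∀ s : Multiset ℂ, (∀ a ∈ s, 0 ≤ a.im) →
      ∀ z ∈ (aeval (derivative : Module.End ℂ ℂ[X]) (s.map (X - C ·)).prod p).roots,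
        z.im ≤ 0 := by
    intro s
    induction s using Multiset.induction with
    | empty => simpa using hp
    | cons a s ih =>
      intro hs
      rw [Multiset.map_cons, Multiset.prod_cons, aeval_derivative_X_sub_C_mul_apply]
      exact roots_derivative_sub_C_mul_im_nonpos (hs a (s.mem_cons_self a))
        (ih fun b hb => hs b (Multiset.mem_cons_of_mem hb))
  rcases eq_or_ne g 0 with rfl | hg0
  · simp
  rw [(IsAlgClosed.splits g).eq_prod_roots, map_mul, aeval_C, Module.End.mul_apply,
    Module.algebraMap_end_apply, roots_smul_nonzero _ (leadingCoeff_ne_zero.mpr hg0)]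
  exact h_prod g.roots hg

theorem aeval_derivative_X_pow {R : Type*} [CommSemiring R] (f : R[X]) (n : ℕ) :
    aeval (derivative : Module.End R R[X]) f (X ^ n) =
      ∑ k ∈ Finset.range (n + 1), C (n.descFactorial k * f.coeff k : R) * X ^ (n - k) := by
  rw [aeval_eq_sum_range' (n := n + 1 + f.natDegree) (by omega), LinearMap.sum_apply]
  refine Finset.sum_congr rfl (fun k _ => ?_) |>.trans
    (Finset.sum_subset (Finset.range_subset_range.mpr (by omega)) fun k _ hk => ?_).symm
  · rw [LinearMap.smul_apply, Module.End.pow_apply, iterate_derivative_X_pow_eq_C_mul,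
      smul_eq_C_mul, ← mul_assoc, ← C_mul, mul_comm (f.coeff k)]
  · simp [Nat.descFactorial_eq_zero_iff_lt.mpr (by simpa using hk)]

theorem natDegree_aeval_derivative_X_pow_le {R : Type*} [CommSemiring R] (f : R[X]) (n : ℕ) :
    (aeval (derivative : Module.End R R[X]) f (X ^ n)).natDegree ≤ n := by
  rw [aeval_derivative_X_pow]
  exact natDegree_sum_le_of_forall_le _ _ fun k _ =>
    (natDegree_C_mul_X_pow_le _ _).trans (Nat.sub_le n k)

theorem reflect_sum {R ι : Type*} [Semiring R] (N : ℕ) (s : Finset ι) (g : ι → R[X]) :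
    reflect N (∑ i ∈ s, g i) = ∑ i ∈ s, reflect N (g i) :=
  map_sum (⟨⟨reflect N, reflect_zero⟩, fun p q => reflect_add p q N⟩ : R[X] →+ R[X]) g s

theorem jensen_coeff_eq_reflect (f : ℂ[X]) (n : ℕ) :
    jensen (fun k => f.coeff k) n =
      reflect n (aeval (derivative : Module.End ℂ ℂ[X]) f (X ^ n)) := by
  rw [aeval_derivative_X_pow, jensen, reflect_sum]
  refine Finset.sum_congr rfl fun k hk => ?_
  have hk : k ≤ n := Nat.lt_succ_iff.mp (Finset.mem_range.mp hk)
  rw [reflect_C_mul_X_pow, revAt_le (Nat.sub_le n k), Nat.sub_sub_self hk,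
    Nat.descFactorial_eq_div hk,
    Nat.cast_div (Nat.factorial_dvd_factorial (Nat.sub_le n k))
      (Nat.cast_ne_zero.mpr (Nat.factorial_ne_zero _))]

theorem IsRoot.inv_of_reflect {K : Type*} [Field K] {p : K[X]} {N : ℕ} {z : K}
    (hp : p.natDegree ≤ N) (hz : z ≠ 0) (h : (reflect N p).IsRoot z) : p.IsRoot z⁻¹ := by
  let _ : Invertible z⁻¹ := invertibleOfNonzero (inv_ne_zero hz)
  have := (eval₂_reflect_eq_zero_iff (RingHom.id K) z⁻¹ N p hp).mp
  simp only [invOf_eq_inv, inv_inv] at this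
  exact this h

end Polynomial

/-- Proposition 3.2: if all zeros of a complex polynomial lie in the closed upper half
plane, so do all zeros of each of its Jensen polynomials. -/
theorem statement12 (f : Polynomial ℂ) (n : ℕ)
    (hzeros : ∀ z ∈ f.roots, 0 ≤ z.im) :
    ∀ z ∈ (jensen (fun k => f.coeff k) n).roots, 0 ≤ z.im := by
  intro z hz
  rcases eq_or_ne z 0 with rfl | hz0
  · simp
  rw [jensen_coeff_eq_reflect] at hz
  set q := aeval (derivative : Module.End ℂ ℂ[X]) f (X ^ n)
  obtain ⟨hq_reflect, hz_root⟩ := mem_roots'.mp hz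
  have hq : q ≠ 0 := fun h => hq_reflect (reflect_eq_zero_iff.mpr h)
  have hz_inv : z⁻¹ ∈ q.roots :=
    mem_roots'.mpr ⟨hq, hz_root.inv_of_reflect (natDegree_aeval_derivative_X_pow_le f n) hz0⟩
  have h_inv_im : z⁻¹.im ≤ 0 :=
    roots_aeval_derivative_im_nonpos hzeros (by simp) _ hz_inv
  by_contra! hz_im
  rw [Complex.inv_im] at h_inv_im
  exact h_inv_im.not_gt (div_pos (neg_pos.mpr hz_im) (Complex.normSq_pos.mpr hz0))
end
end

section
/- Let f be a formal power series with real coefficients, and for each nonnegative integer n set N_n = N(A(f,n); ℂ∖S_0). Then N_0 = 0 and N_n ≤ N_{n+1} for every nonnegative integer n, i.e. 0 = N_0 ≤ N_1 ≤ N_2 ≤ ⋯. -/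
noncomputable section
open Filter Polynomial Topology

/-! Since `A(f,n+1)' = (n+1) A(f,n)`, it suffices that differentiating a real polynomial `p`
does not increase the number of its zeros off `[0, ∞)`. Rolle's theorem, counted with
multiplicities, gives `p` at most one more zero on `[0, ∞)` than `p'`; since `deg p' = deg p - 1`
and all complex zeros are counted, `p'` has at most as many zeros off `[0, ∞)` as `p`. -/

namespace Polynomial

variable {s : Set ℝ} [DecidablePred (· ∈ s)]

theorem card_roots_toFinset_filter_le_derivative_sdiff_succ (hs : s.OrdConnected) (p : ℝ[X]) :
    (p.roots.filter (· ∈ s)).toFinset.card ≤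
      (((derivative p).roots.filter (· ∈ s)).toFinset \
        (p.roots.filter (· ∈ s)).toFinset).card + 1 := by
  rcases eq_or_ne (derivative p) 0 with hp' | hp'
  · rw [eq_C_of_derivative_eq_zero hp', roots_C]
    simp
  have hp : p ≠ 0 := ne_of_apply_ne derivative (by rwa [derivative_zero])
  refine Finset.card_le_sdiff_of_interleaved fun x hx y hy hxy _ => ?_
  rw [Multiset.mem_toFinset, Multiset.mem_filter, mem_roots hp] at hx hy
  obtain ⟨z, hz, hz'⟩ := exists_deriv_eq_zero hxy p.continuousOn (hx.1.trans hy.1.symm)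
  refine ⟨z, ?_, hz⟩
  rw [Multiset.mem_toFinset, Multiset.mem_filter, mem_roots hp', IsRoot, ← p.deriv]
  exact ⟨hz', hs.out hx.2 hy.2 (Set.Ioo_subset_Icc_self hz)⟩

theorem card_roots_filter_le_derivative (hs : s.OrdConnected) (p : ℝ[X]) :
    Multiset.card (p.roots.filter (· ∈ s)) ≤
      Multiset.card ((derivative p).roots.filter (· ∈ s)) + 1 := by
  set R := p.roots.filter (· ∈ s)
  set D := (derivative p).roots.filter (· ∈ s)
  calc Multiset.card R = ∑ x ∈ R.toFinset, R.count x := (Multiset.toFinset_sum_count_eq _).symm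
    _ = ∑ x ∈ R.toFinset, (R.count x - 1 + 1) :=
        (Finset.sum_congr rfl fun x hx => tsub_add_cancel_of_le <|
          Nat.succ_le_iff.2 <| Multiset.count_pos.2 <| Multiset.mem_toFinset.1 hx).symm
    _ = (∑ x ∈ R.toFinset, (R.count x - 1)) + R.toFinset.card := by
        rw [Finset.sum_add_distrib, ← Finset.card_eq_sum_ones]
    _ ≤ (∑ x ∈ R.toFinset, D.count x) + ((D.toFinset \ R.toFinset).card + 1) := by
        refine add_le_add (Finset.sum_le_sum fun x hx => ?_)
          (card_roots_toFinset_filter_le_derivative_sdiff_succ hs p)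
        have hxs : x ∈ s := (Multiset.mem_filter.1 (Multiset.mem_toFinset.1 hx)).2
        rw [Multiset.count_filter_of_pos hxs, Multiset.count_filter_of_pos hxs,
          count_roots, count_roots]
        exact rootMultiplicity_sub_one_le_derivative_rootMultiplicity _ _
    _ ≤ (∑ x ∈ R.toFinset, D.count x) +
          ((∑ x ∈ D.toFinset \ R.toFinset, D.count x) + 1) := by
        simp only [Finset.card_eq_sum_ones]
        gcongr with x hx
        rw [Nat.succ_le_iff, Multiset.count_pos, ← Multiset.mem_toFinset]
        exact (Finset.mem_sdiff.1 hx).1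
    _ = Multiset.card D + 1 := by
        rw [← add_assoc, ← Finset.sum_union Finset.disjoint_sdiff,
          Finset.union_sdiff_self_eq_union, ← Multiset.toFinset_sum_count_eq,
          ← Finset.sum_subset Finset.subset_union_right]
        intro x _ hx
        simpa only [Multiset.mem_toFinset, Multiset.count_eq_zero] using hx

end Polynomial

theorem NPoly_add_NPoly_compl (q : ℂ[X]) (X : Set ℂ) :
    NPoly q X + NPoly q Xᶜ = q.natDegree := by
  classical
  rw [NPoly, NPoly, ← Multiset.card_add, ← IsAlgClosed.card_roots_eq_natDegree]
  convert congrArg Multiset.card (Multiset.filter_add_not (· ∈ X) q.roots)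

theorem NPolyR_image_ofReal (p : ℝ[X]) (s : Set ℝ) [DecidablePred (· ∈ s)] :
    NPolyR p ((↑) '' s) = Multiset.card (p.roots.filter (· ∈ s)) := by
  rw [NPolyR, NPoly, ← Multiset.card_map ((↑) : ℝ → ℂ)]
  congr 1
  ext z
  classical
  rw [Multiset.count_filter]
  split_ifs with hz
  · obtain ⟨x, hx, rfl⟩ := hz
    rw [Multiset.count_map_eq_count' _ _ Complex.ofReal_injective,
      Multiset.count_filter_of_pos hx, count_roots, count_roots]
    exact (eq_rootMultiplicity_map (algebraMap ℝ ℂ).injective x).symm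
  · refine (Multiset.count_eq_zero.2 fun hmem => hz ?_).symm
    obtain ⟨x, hx, rfl⟩ := Multiset.mem_map.1 hmem
    exact ⟨x, (Multiset.mem_filter.1 hx).2, rfl⟩

theorem S0_eq_image_ofReal_Ici : S0 = ((↑) : ℝ → ℂ) '' Set.Ici 0 := by
  ext z
  constructor
  · rintro ⟨him, hre⟩
    exact ⟨z.re, hre, Complex.ext rfl him.symm⟩
  · rintro ⟨x, hx, rfl⟩
    exact ⟨Complex.ofReal_im x, hx⟩

theorem NPolyR_compl_S0_add_card_roots_nonneg (p : ℝ[X]) :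
    NPolyR p S0ᶜ + Multiset.card (p.roots.filter (· ∈ Set.Ici 0)) = p.natDegree := by
  rw [← NPolyR_image_ofReal, ← S0_eq_image_ofReal_Ici, add_comm]
  unfold NPolyR
  rw [NPoly_add_NPoly_compl, natDegree_map]

theorem NPolyR_derivative_compl_S0_le (p : ℝ[X]) :
    NPolyR (derivative p) S0ᶜ ≤ NPolyR p S0ᶜ := by
  rcases eq_or_ne (derivative p) 0 with hp' | hp'
  · simp [hp', NPolyR, NPoly]
  have hdeg : (derivative p).natDegree + 1 = p.natDegree := by
    have : p.natDegree ≠ 0 := fun h => hp' (derivative_of_natDegree_zero h)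
    rw [natDegree_derivative]
    omega
  have hrolle := card_roots_filter_le_derivative (Set.ordConnected_Ici (a := (0 : ℝ))) p
  have hcount := NPolyR_compl_S0_add_card_roots_nonneg p
  have hcount' := NPolyR_compl_S0_add_card_roots_nonneg (derivative p)
  omega

theorem NPolyR_C_mul {c : ℝ} (hc : c ≠ 0) (p : ℝ[X]) (X : Set ℂ) :
    NPolyR (C c * p) X = NPolyR p X := by
  rw [NPolyR, NPolyR, NPoly, NPoly, Polynomial.map_mul, map_C,
    roots_C_mul _ ((map_ne_zero_iff _ (algebraMap ℝ ℂ).injective).2 hc)]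

theorem NPolyR_C (c : ℝ) (X : Set ℂ) : NPolyR (C c) X = 0 := by
  simp [NPolyR, NPoly]

open Nat in
theorem factorial_succ_div_factorial_mul {n k : ℕ} (hk : k ≤ n) :
    ((n + 1)! : ℝ) / (n + 1 - k)! * (n + 1 - k : ℕ) = (n + 1) * (n ! / (n - k)!) := by
  rw [show n + 1 - k = n - k + 1 by omega, factorial_succ, factorial_succ]
  push_cast
  field_simp

theorem appellR_zero (a : ℕ → ℝ) : appellR a 0 = C (a 0) := by
  simp [appellR]

theorem derivative_appellR_succ (a : ℕ → ℝ) (n : ℕ) :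
    derivative (appellR a (n + 1)) = C ((n : ℝ) + 1) * appellR a n := by
  rw [appellR, derivative_sum, Finset.sum_range_succ, Nat.sub_self, pow_zero, mul_one,
    derivative_C, add_zero, appellR, Finset.mul_sum]
  refine Finset.sum_congr rfl fun k hk => ?_
  have hk : k ≤ n := Nat.lt_succ_iff.1 (Finset.mem_range.1 hk)
  rw [derivative_C_mul_X_pow, show n + 1 - k - 1 = n - k by omega, ← mul_assoc, ← C_mul]
  congr 2
  rw [mul_comm _ (a k), mul_assoc, factorial_succ_div_factorial_mul hk]
  ring

/-- Theorem 3.5 (1): the numbers `N_n = N(A(f,n); ℂ∖S₀)` satisfy `0 = N₀ ≤ N₁ ≤ N₂ ≤ ⋯`. -/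
theorem statement15 (a : ℕ → ℝ) :
    NPolyR (appellR a 0) S0ᶜ = 0 ∧
    ∀ n : ℕ, NPolyR (appellR a n) S0ᶜ ≤ NPolyR (appellR a (n + 1)) S0ᶜ := by
  refine ⟨by rw [appellR_zero, NPolyR_C], fun n => ?_⟩
  calc NPolyR (appellR a n) S0ᶜ = NPolyR (derivative (appellR a (n + 1))) S0ᶜ := by
        rw [derivative_appellR_succ, NPolyR_C_mul (by positivity)]
    _ ≤ NPolyR (appellR a (n + 1)) S0ᶜ := NPolyR_derivative_compl_S0_le _
end
end
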